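/- The Wong–Zakai correction term for g(ρ) = -(1/2)(I₃ + [ρ]ₓ + ρρᵀ) with diagonal covariance matrix Q² is W(ρ) := the vector with i-th entry Σ_{k=1}^{3}Σ_{j=1}^{3} (Q²ⱼⱼ/2)·g_{kj}(ρ)·∂g_{ij}(ρ)/∂ρ_k, and it equals (1/4)(I₃ + [ρ]ₓ + ρρᵀ)Q²ρ. -/

import Mathlib

/-!
Write `g = -A/2` with `A(ρ) = I₃ + [ρ]ₓ + ρρᵀ`. Since `∂g_{ij}/∂ρ` is linear, the sum over `k`
contracts it against the `j`-th column of `g`, so the `i`-th entry of the correction is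
`Σⱼ (Q²ⱼⱼ/8) (DA(ρ)[A eⱼ])_{ij}`. The polynomial identity `DA(ρ)[A eⱼ] eⱼ = 2 ρⱼ A eⱼ` finishes.
-/

open Matrix

noncomputable section

/-- The skew-symmetric matrix `[v]ₓ` of a vector `v ∈ ℝ³`. -/
def skew (v : Fin 3 → ℝ) : Matrix (Fin 3) (Fin 3) ℝ :=
  !![0, -v 2, v 1; v 2, 0, -v 0; -v 1, v 0, 0]

/-- `g(ρ) = -(1/2)(I₃ + [ρ]ₓ + ρρᵀ)`. -/
def gmap (ρ : Fin 3 → ℝ) : Matrix (Fin 3) (Fin 3) ℝ :=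
  (-(1 / 2) : ℝ) • ((1 : Matrix (Fin 3) (Fin 3) ℝ) + skew ρ + vecMulVec ρ ρ)

def kinematicMatrix (ρ : Fin 3 → ℝ) : Matrix (Fin 3) (Fin 3) ℝ :=
  1 + skew ρ + vecMulVec ρ ρ

/-- The derivative of `kinematicMatrix` at `ρ` in the direction `v`. -/
def kinematicMatrixDeriv (ρ v : Fin 3 → ℝ) : Matrix (Fin 3) (Fin 3) ℝ :=
  skew v + vecMulVec ρ v + vecMulVec v ρ

def skewLinearMap : (Fin 3 → ℝ) →ₗ[ℝ] Matrix (Fin 3) (Fin 3) ℝ where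
  toFun := skew
  map_add' v w := by
    ext i j
    fin_cases i <;> fin_cases j <;> simp [skew] <;> ring
  map_smul' c v := by
    ext i j
    fin_cases i <;> fin_cases j <;> simp [skew]

theorem hasFDerivAt_skew_apply (ρ : Fin 3 → ℝ) (i j : Fin 3) :
    HasFDerivAt (fun x => skew x i j)
      (LinearMap.toContinuousLinearMap (entryLinearMap ℝ ℝ i j ∘ₗ skewLinearMap)) ρ :=
  (LinearMap.toContinuousLinearMap (entryLinearMap ℝ ℝ i j ∘ₗ skewLinearMap)).hasFDerivAt

theorem fderiv_gmap_apply (ρ v : Fin 3 → ℝ) (i j : Fin 3) :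
    fderiv ℝ (fun x => gmap x i j) ρ v = -(1 / 2) * kinematicMatrixDeriv ρ v i j := by
  have hg : (fun x => gmap x i j) =
      fun x => -(1 / 2) * ((1 : Matrix (Fin 3) (Fin 3) ℝ) i j + skew x i j + x i * x j) := by
    funext x
    simp [gmap, vecMulVec_apply]
  rw [hg, ((((hasFDerivAt_const _ ρ).fun_add (hasFDerivAt_skew_apply ρ i j)).fun_add
    ((hasFDerivAt_apply i ρ).fun_mul (hasFDerivAt_apply j ρ))).const_mul _).fderiv]
  simp [skewLinearMap, kinematicMatrixDeriv, vecMulVec_apply]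
  ring

theorem kinematicMatrixDeriv_transpose_apply (ρ : Fin 3 → ℝ) (i j : Fin 3) :
    kinematicMatrixDeriv ρ ((kinematicMatrix ρ)ᵀ j) i j = 2 * ρ j * kinematicMatrix ρ i j := by
  fin_cases i <;> fin_cases j <;>
    simp [kinematicMatrixDeriv, kinematicMatrix, skew, vecMulVec_apply, one_apply] <;> ring

theorem sum_smul_apply_single {ι R M : Type*} [Fintype ι] [DecidableEq ι] [CommSemiring R]
    [AddCommMonoid M] [Module R M] (f : (ι → R) →ₗ[R] M) (c : ι → R) :
    ∑ k, c k • f (Pi.single k 1) = f c := by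
  conv_rhs => rw [pi_eq_sum_univ' c, map_sum]
  simp only [map_smul]

theorem wong_zakai_correction_general (ρ : Fin 3 → ℝ) (q : Fin 3 → ℝ)
    (i : Fin 3) :
    (∑ k : Fin 3, ∑ j : Fin 3,
        q j / 2 * gmap ρ k j *
          fderiv ℝ (fun x : Fin 3 → ℝ => gmap x i j) ρ (Pi.single k 1)) =
      ((1 / 4 : ℝ) •
        (((1 : Matrix (Fin 3) (Fin 3) ℝ) + skew ρ + vecMulVec ρ ρ) *
          Matrix.diagonal q).mulVec ρ) i := by
  have hcol (j : Fin 3) : (gmap ρ)ᵀ j = (-(1 / 2) : ℝ) • (kinematicMatrix ρ)ᵀ j := rfl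
  calc _ = ∑ j, q j / 2 * fderiv ℝ (fun x => gmap x i j) ρ ((gmap ρ)ᵀ j) := by
        rw [Finset.sum_comm]
        refine Finset.sum_congr rfl fun j _ => ?_
        have h := sum_smul_apply_single (fderiv ℝ (fun x => gmap x i j) ρ).toLinearMap ((gmap ρ)ᵀ j)
        simp only [ContinuousLinearMap.coe_coe, transpose_apply, smul_eq_mul] at h
        simp only [← h, Finset.mul_sum, mul_assoc]
    _ = ∑ j, 1 / 4 * (kinematicMatrix ρ i j * q j * ρ j) := by
        refine Finset.sum_congr rfl fun j _ => ?_
        rw [hcol, map_smul, smul_eq_mul, fderiv_gmap_apply, kinematicMatrixDeriv_transpose_apply]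
        ring
    _ = _ := by
        simp [kinematicMatrix, mulVec, dotProduct, mul_diagonal, Finset.mul_sum]

/-- The Wong–Zakai correction term: for diagonal covariance `Q²` with diagonal
entries `q j ≥ 0`, the vector with `i`-th entry
`Σₖ Σⱼ (Q²ⱼⱼ/2) g_{kj}(ρ) ∂g_{ij}(ρ)/∂ρₖ` equals `(1/4)(I₃ + [ρ]ₓ + ρρᵀ) Q² ρ`. -/
theorem wong_zakai_correction (ρ : Fin 3 → ℝ) (q : Fin 3 → ℝ) (hq : ∀ j, 0 ≤ q j)
    (i : Fin 3) :
    (∑ k : Fin 3, ∑ j : Fin 3,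
        q j / 2 * gmap ρ k j *
          fderiv ℝ (fun x : Fin 3 → ℝ => gmap x i j) ρ (Pi.single k 1)) =
      ((1 / 4 : ℝ) •
        (((1 : Matrix (Fin 3) (Fin 3) ℝ) + skew ρ + vecMulVec ρ ρ) *
          Matrix.diagonal q).mulVec ρ) i :=
  wong_zakai_correction_general ρ q i
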